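/- Let x ∈ [0,1] be non-dyadic and not in S (the set of local maxima abscissas, characterized by eventually alternating binary digits). Then there exists δ > 0 such that for every n ≥ 0 there exists J ≥ n with |C_{J-1}(x)| > δ·2^{J(1-α)} and moreover either (C_{J-1}(x) > 0 and i_{J+1}(x) = 0) or (C_{J-1}(x) < 0 and i_{J+1}(x) = 1). -/

import Mathlib

/-!
Write `ε j = (-1) ^ i_{j+1}(x)` and `r = 2 ^ (1 - α) > 1`, so that `C_{J-1}(x) = ∑_{j<J} ε j r ^ j` and
the required sign condition says `ε J · C_{J-1}(x) > 0`. If the signs are eventually constant, `ε J · C_{J-1}`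
grows like the geometric series `r ^ J / (r - 1)`. Otherwise, as `x ∉ S`, the signs are not eventually
alternating either, so beyond any `n` some sign change at `m` is immediately followed by a repetition;
then `ε m C_{m-1} + ε (m+2) C_{m+1} = (r - 1) r ^ m`, so for `δ = (r - 1) / (2 (1 + r ^ 2))` one of the
two summands exceeds `δ r ^ J` (with `J = m` or `J = m + 2`).
-/

open Real

noncomputable def digit (x : ℝ) (j : ℕ) : ℕ := (⌊(2:ℝ) ^ j * x⌋).toNat % 2

noncomputable def knoppSlope (α x : ℝ) (n : ℕ) : ℝ :=
  ∑ j ∈ Finset.range n, (-1:ℝ) ^ (digit x (j+1)) * (2:ℝ) ^ ((1-α) * (j:ℝ))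

def isDyadic (x : ℝ) : Prop := ∃ K N : ℕ, Odd K ∧ x = (K:ℝ) / 2 ^ N

def inS (x : ℝ) : Prop :=
  (∃ k N : ℕ, x = (k:ℝ)/2^N + 1/(3*2^N) ∨ x = (k:ℝ)/2^N + 2/(3*2^N)) ∧ x ∈ Set.Ioo (0:ℝ) 1

open Finset

noncomputable def signedPowSum (ε : ℕ → ℝ) (r : ℝ) (n : ℕ) : ℝ := ∑ j ∈ range n, ε j * r ^ j

section SignedPowSum

variable {ε : ℕ → ℝ} {r : ℝ}

lemma signedPowSum_succ (ε : ℕ → ℝ) (r : ℝ) (n : ℕ) :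
    signedPowSum ε r (n + 1) = signedPowSum ε r n + ε n * r ^ n :=
  sum_range_succ _ _

lemma abs_signedPowSum_le (hε : ∀ j, |ε j| ≤ 1) (hr : 0 ≤ r) (n : ℕ) :
    |signedPowSum ε r n| ≤ ∑ j ∈ range n, r ^ j :=
  (abs_sum_le_sum_abs _ _).trans <| sum_le_sum fun j _ => by
    rw [abs_mul, abs_of_nonneg (pow_nonneg hr j)]
    exact mul_le_of_le_one_left (pow_nonneg hr j) (hε j)

lemma sub_two_mul_geom_sum_le_mul_signedPowSum (hε : ∀ j, |ε j| = 1) (hr : 0 ≤ r) {s : ℝ}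
    {n J : ℕ} (hnJ : n ≤ J) (hs : ∀ j ≥ n, ε j = s) :
    ∑ j ∈ range J, r ^ j - 2 * ∑ j ∈ range n, r ^ j ≤ s * signedPowSum ε r J := by
  have hs1 : |s| = 1 := hs n le_rfl ▸ hε n
  have hss : s * s = 1 := by rw [← abs_mul_abs_self, hs1, one_mul]
  have hsplit : signedPowSum ε r J = signedPowSum ε r n + s * ∑ j ∈ Ico n J, r ^ j := by
    rw [signedPowSum, signedPowSum, ← sum_range_add_sum_Ico _ hnJ, mul_sum]
    exact congrArg _ (sum_congr rfl fun j hj => by rw [hs j (mem_Ico.1 hj).1])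
  have hgeom := sum_range_add_sum_Ico (fun j => r ^ j) hnJ
  have hlow := neg_abs_le (s * signedPowSum ε r n)
  rw [abs_mul, hs1, one_mul] at hlow
  rw [hsplit, mul_add, ← mul_assoc, hss, one_mul]
  linarith [abs_signedPowSum_le (fun j => (hε j).le) hr n]

lemma exists_lt_mul_signedPowSum_of_forall_eq (hε : ∀ j, |ε j| = 1) (hr : 1 < r) {δ : ℝ}
    (hδ : 2 * δ * (r - 1) ≤ 1) {s : ℝ} {n : ℕ} (hs : ∀ j ≥ n, ε j = s) :
    ∃ J ≥ n, δ * r ^ J < s * signedPowSum ε r J := by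
  obtain ⟨K, hK⟩ := pow_unbounded_of_one_lt 4 hr
  refine ⟨n + K, le_self_add, lt_of_lt_of_le ?_
    (sub_two_mul_geom_sum_le_mul_signedPowSum hε (by linarith) le_self_add hs)⟩
  have hr1 : 0 < r - 1 := by linarith
  have hrn : 0 < r ^ n := pow_pos (by linarith) n
  have hrJ : 4 * r ^ n < r ^ (n + K) := by rw [pow_add]; nlinarith
  have hgeom : (r ^ (n + K) - 1) / (r - 1) - 2 * ((r ^ n - 1) / (r - 1))
      = (r ^ (n + K) - 2 * r ^ n + 1) / (r - 1) := by
    field_simp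
    ring
  rw [geom_sum_eq hr.ne', geom_sum_eq hr.ne', hgeom, lt_div_iff₀ hr1]
  nlinarith [mul_le_mul_of_nonneg_right hδ (pow_nonneg hr1.le (n + K))]

lemma mul_signedPowSum_add_mul_signedPowSum_add_two (hε : ∀ j, |ε j| = 1) {m : ℕ}
    (hflip : ε (m + 1) = -ε m) (hrep : ε (m + 2) = ε (m + 1)) :
    ε m * signedPowSum ε r m + ε (m + 2) * signedPowSum ε r (m + 2) = (r - 1) * r ^ m := by
  have hsq : ε m * ε m = 1 := by rw [← abs_mul_abs_self, hε, one_mul]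
  rw [signedPowSum_succ, signedPowSum_succ, hrep, hflip]
  linear_combination (r ^ (m + 1) - r ^ m) * hsq

lemma exists_lt_mul_signedPowSum_of_flip_of_repeat (hε : ∀ j, |ε j| = 1) (hr : 1 < r) {δ : ℝ}
    (hδ : 2 * δ * (1 + r ^ 2) ≤ r - 1) {m : ℕ} (hflip : ε (m + 1) = -ε m)
    (hrep : ε (m + 2) = ε (m + 1)) :
    ∃ J ≥ m, δ * r ^ J < ε J * signedPowSum ε r J := by
  by_contra! h
  have hsum := mul_signedPowSum_add_mul_signedPowSum_add_two (r := r) hε hflip hrep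
  have hrm : 0 < r ^ m := pow_pos (by linarith) m
  have h2 := h (m + 2) (by omega)
  rw [pow_add] at h2
  nlinarith [h m le_rfl, mul_le_mul_of_nonneg_right hδ hrm.le]

lemma exists_flip_then_repeat (hε : ∀ j, |ε j| = 1) {a : ℕ} (hflip : ε (a + 1) ≠ ε a)
    (hrep : ∃ j ≥ a, ε (j + 1) = ε j) :
    ∃ m ≥ a, ε (m + 1) = -ε m ∧ ε (m + 2) = ε (m + 1) := by
  obtain ⟨j, hj, hjrep⟩ := hrep
  obtain ⟨k, hk, hk1⟩ := Nat.exists_not_and_succ_of_not_zero_of_exists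
    (p := fun k => ε (a + k + 1) = ε (a + k)) hflip ⟨j - a, by simpa [Nat.add_sub_cancel' hj]⟩
  refine ⟨a + k, le_self_add, ?_, hk1⟩
  exact (abs_eq_abs.1 ((hε _).trans (hε _).symm)).resolve_left hk

theorem exists_forall_exists_lt_mul_signedPowSum (hε : ∀ j, |ε j| = 1) (hr : 1 < r)
    (hrep : ∀ M, ∃ j ≥ M, ε (j + 1) = ε j) :
    ∃ δ > 0, ∀ n, ∃ J ≥ n, δ * r ^ J < ε J * signedPowSum ε r J := by
  have hr2 : 0 < 1 + r ^ 2 := by positivity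
  set δ := (r - 1) / (2 * (1 + r ^ 2)) with hδ
  have hδr2 : 2 * δ * (1 + r ^ 2) = r - 1 := by
    rw [hδ]
    field_simp
  have hδr : 2 * δ * (r - 1) ≤ 1 := by
    have : 2 * δ * (r - 1) * (1 + r ^ 2) = (r - 1) ^ 2 := by
      rw [mul_right_comm, hδr2]
      ring
    nlinarith
  refine ⟨δ, div_pos (by linarith) (by positivity), fun n => ?_⟩
  by_cases hconst : ∀ j ≥ n, ε (j + 1) = ε j
  · have hs : ∀ j ≥ n, ε j = ε n := fun j hj => by
      induction j, hj using Nat.le_induction with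
      | base => rfl
      | succ j hj ih => rw [hconst j hj, ih]
    obtain ⟨J, hJ, hlt⟩ := exists_lt_mul_signedPowSum_of_forall_eq hε hr hδr hs
    exact ⟨J, hJ, by rwa [hs J hJ]⟩
  · push Not at hconst
    obtain ⟨a, ha, hflip⟩ := hconst
    obtain ⟨m, hm, hmflip, hmrep⟩ := exists_flip_then_repeat hε hflip (hrep a)
    obtain ⟨J, hJ, hlt⟩ :=
      exists_lt_mul_signedPowSum_of_flip_of_repeat hε hr hδr2.le hmflip hmrep
    exact ⟨J, by omega, hlt⟩

end SignedPowSum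

lemma add_eq_one_of_neg_one_pow_ne {a b : ℕ} (ha : a < 2) (hb : b < 2)
    (h : (-1 : ℝ) ^ a ≠ (-1) ^ b) : a + b = 1 := by
  interval_cases a <;> interval_cases b <;> simp_all

lemma sign_cases_of_neg_one_pow_mul_pos {d : ℕ} (hd : d < 2) {c : ℝ} (h : 0 < (-1) ^ d * c) :
    (0 < c ∧ d = 0) ∨ (c < 0 ∧ d = 1) := by
  interval_cases d
  · exact Or.inl ⟨by simpa using h, rfl⟩
  · exact Or.inr ⟨by simpa using h, rfl⟩

lemma eq_zero_of_forall_abs_le_of_succ_eq_mul {u : ℕ → ℝ} {a B : ℝ} (ha : 1 < |a|)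
    (hu : ∀ k, u (k + 1) = a * u k) (hB : ∀ k, |u k| ≤ B) : u 0 = 0 := by
  by_contra h0
  have hpow : ∀ k, |u k| = |a| ^ k * |u 0| := fun k => by
    induction k with
    | zero => simp
    | succ k ih => rw [hu, abs_mul, ih, pow_succ]; ring
  obtain ⟨k, hk⟩ := pow_unbounded_of_one_lt (B / |u 0|) ha
  have hk' := hB k
  rw [hpow, ← le_div_iff₀ (abs_pos.2 h0)] at hk'
  linarith

section Digits

variable {x : ℝ}

lemma digit_lt_two (x : ℝ) (j : ℕ) : digit x j < 2 := Nat.mod_lt _ two_pos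

lemma fract_two_pow_succ_mul (hx : 0 ≤ x) (j : ℕ) :
    Int.fract ((2 : ℝ) ^ (j + 1) * x) = 2 * Int.fract ((2 : ℝ) ^ j * x) - digit x (j + 1) := by
  set y := (2 : ℝ) ^ j * x
  have hy : (2 : ℝ) ^ (j + 1) * x = ((2 * ⌊y⌋ : ℤ) : ℝ) + 2 * Int.fract y := by
    have : (2 : ℝ) ^ (j + 1) * x = 2 * y := by rw [pow_succ]; ring
    push_cast
    linarith [Int.floor_add_fract y]
  have hfloor_nonneg : 0 ≤ ⌊y⌋ := Int.floor_nonneg.2 (by positivity)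
  have hb0 : 0 ≤ ⌊2 * Int.fract y⌋ := Int.floor_nonneg.2 (by linarith [Int.fract_nonneg y])
  have hb2 : ⌊2 * Int.fract y⌋ < 2 := Int.floor_lt.2 (by push_cast; linarith [Int.fract_lt_one y])
  have hdigit : (digit x (j + 1) : ℤ) = ⌊2 * Int.fract y⌋ := by
    rw [digit, hy, Int.floor_intCast_add]
    omega
  rw [hy, Int.fract_intCast_add, ← Int.self_sub_floor, ← hdigit, Int.cast_natCast]

lemma fract_two_pow_mul_eq_of_digit_add_digit_succ (hx : 0 ≤ x) {M : ℕ}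
    (h : ∀ j ≥ M, digit x j + digit x (j + 1) = 1) :
    Int.fract ((2 : ℝ) ^ M * x) = (digit x (M + 1) + 1) / 3 := by
  set d := digit x (M + 1)
  have hdigit : ∀ k, digit x (M + 2 * k + 1) = d := fun k => by
    induction k with
    | zero => rfl
    | succ k ih =>
      have h1 := h (M + 2 * k + 1) (by omega)
      have h2 := h (M + 2 * k + 1 + 1) (by omega)
      rw [show M + 2 * (k + 1) + 1 = M + 2 * k + 1 + 1 + 1 by ring]
      omega
  -- `(d + 1) / 3` is the fixed point of the two-digit shift `f ↦ 4 f - 2 d - (1 - d)`.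
  have hstep : ∀ k, Int.fract ((2 : ℝ) ^ (M + 2 * (k + 1)) * x) - (d + 1) / 3
      = 4 * (Int.fract ((2 : ℝ) ^ (M + 2 * k) * x) - (d + 1) / 3) := fun k => by
    have hnext : (digit x (M + 2 * k + 1) : ℝ) + digit x (M + 2 * k + 1 + 1) = 1 := by
      exact_mod_cast h (M + 2 * k + 1) (by omega)
    rw [hdigit k] at hnext
    rw [show M + 2 * (k + 1) = M + 2 * k + 1 + 1 by ring, fract_two_pow_succ_mul hx,
      fract_two_pow_succ_mul hx, hdigit k]
    linarith
  have hbound : ∀ k, |Int.fract ((2 : ℝ) ^ (M + 2 * k) * x) - (d + 1) / 3| ≤ 1 := fun k => by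
    have hd : (d : ℝ) ≤ 1 := by exact_mod_cast Nat.le_of_lt_succ (digit_lt_two x (M + 1))
    rw [abs_le]
    constructor <;>
      linarith [Int.fract_nonneg ((2 : ℝ) ^ (M + 2 * k) * x),
        Int.fract_lt_one ((2 : ℝ) ^ (M + 2 * k) * x), (Nat.cast_nonneg d : (0 : ℝ) ≤ d)]
  have := eq_zero_of_forall_abs_le_of_succ_eq_mul (by norm_num) hstep hbound
  simpa [sub_eq_zero] using this

lemma inS_of_digit_add_digit_succ (hx : x ∈ Set.Icc 0 1) {M : ℕ}
    (h : ∀ j ≥ M, digit x j + digit x (j + 1) = 1) : inS x := by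
  have hf := fract_two_pow_mul_eq_of_digit_add_digit_succ hx.1 h
  set d := digit x (M + 1)
  have hfpos : 0 < Int.fract ((2 : ℝ) ^ M * x) := by rw [hf]; positivity
  have hm : 0 ≤ ⌊(2 : ℝ) ^ M * x⌋ := Int.floor_nonneg.2 (by positivity [hx.1])
  have hfm := Int.self_sub_floor ((2 : ℝ) ^ M * x)
  set m := ⌊(2 : ℝ) ^ M * x⌋
  have hmcast : ((m.toNat : ℕ) : ℝ) = m := by exact_mod_cast Int.toNat_of_nonneg hm
  have hxeq : x = (m.toNat : ℝ) / 2 ^ M + (d + 1) / (3 * 2 ^ M) := by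
    rw [hmcast]
    field_simp
    linarith
  refine ⟨⟨m.toNat, M, ?_⟩, ?_, lt_of_le_of_ne hx.2 fun hx1 => ?_⟩
  · rcases (by have := digit_lt_two x (M + 1); omega : d = 0 ∨ d = 1) with hd | hd
    · left; rw [hxeq, hd]; push_cast; ring
    · right; rw [hxeq, hd]; push_cast; ring
  · rw [hxeq]; positivity
  · have hfract : Int.fract ((2 : ℝ) ^ M) = 0 := by exact_mod_cast Int.fract_natCast (2 ^ M)
    rw [hx1, mul_one, hfract] at hfpos
    exact lt_irrefl 0 hfpos

end Digits

theorem slope_sign_bounds_general (α : ℝ) (hα1 : α < 1)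
    (x : ℝ) (hx : x ∈ Set.Icc (0:ℝ) 1) (hns : ¬ inS x) :
    ∃ δ > 0, ∀ n : ℕ, ∃ J : ℕ, n ≤ J ∧
      δ * (2:ℝ) ^ ((J:ℝ) * (1-α)) < |knoppSlope α x J| ∧
      ((0 < knoppSlope α x J ∧ digit x (J+1) = 0) ∨
        (knoppSlope α x J < 0 ∧ digit x (J+1) = 1)) := by
  set ε : ℕ → ℝ := fun j => (-1) ^ digit x (j + 1)
  have hr : 1 < (2 : ℝ) ^ (1 - α) := Real.one_lt_rpow (by norm_num) (by linarith)
  have hslope : ∀ J, knoppSlope α x J = signedPowSum ε (2 ^ (1 - α)) J := fun J =>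
    sum_congr rfl fun j _ => by rw [Real.rpow_mul_natCast (by norm_num)]
  have hrep : ∀ M, ∃ j ≥ M, ε (j + 1) = ε j := by
    intro M
    by_contra! h
    refine hns (inS_of_digit_add_digit_succ hx (M := M + 1) fun j hj => ?_)
    obtain ⟨i, rfl⟩ : ∃ i, j = i + 1 := ⟨j - 1, by omega⟩
    exact add_eq_one_of_neg_one_pow_ne (digit_lt_two x _) (digit_lt_two x _) (h i (by omega)).symm
  have hε : ∀ j, |ε j| = 1 := fun j => abs_neg_one_pow _
  obtain ⟨δ, hδ, hJ⟩ := exists_forall_exists_lt_mul_signedPowSum hε hr hrep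
  refine ⟨δ, hδ, fun n => ?_⟩
  obtain ⟨J, hnJ, hlt⟩ := hJ n
  refine ⟨J, hnJ, ?_⟩
  rw [mul_comm (J : ℝ), Real.rpow_mul_natCast (by norm_num), hslope]
  refine ⟨hlt.trans_le ?_, sign_cases_of_neg_one_pow_mul_pos (digit_lt_two x (J + 1))
    ((by positivity : 0 < δ * _).trans hlt)⟩
  exact (le_abs_self _).trans_eq (by rw [abs_mul, abs_neg_one_pow, one_mul])

theorem slope_sign_bounds (α : ℝ) (hα : 0 < α) (hα1 : α < 1)
    (x : ℝ) (hx : x ∈ Set.Icc (0:ℝ) 1) (hnd : ¬ isDyadic x) (hns : ¬ inS x) :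
    ∃ δ > 0, ∀ n : ℕ, ∃ J : ℕ, n ≤ J ∧
      δ * (2:ℝ) ^ ((J:ℝ) * (1-α)) < |knoppSlope α x J| ∧
      ((0 < knoppSlope α x J ∧ digit x (J+1) = 0) ∨
        (knoppSlope α x J < 0 ∧ digit x (J+1) = 1)) :=
  slope_sign_bounds_general α hα1 x hx hns
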